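/- arXiv:1704.04218 — 6 statements merged into one kernel-verified Lean document; each statement's English description precedes it below -/
import Mathlib

section
/- Let x* ∈ X ⊆ ℝⁿ be an equilibrium of ẋ = f(x) (f continuously differentiable, X forward invariant, solutions defined for all t ≥ 0). Suppose there exists a sequence of global Lyapunov functions Vⁱ : X → ℝ≥0 for x* (i = 1, 2, …) that converges locally uniformly on X to V(x) := lim_{i→∞} Vⁱ(x). If V is positive definite (V(x) ≥ 0 with V(x) = 0 iff x = x*) and globally proper (every sublevel set {x ∈ X : V(x) ≤ L} is compact), then V is also a global Lyapunov function for x*. -/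
/-!
Each `Vⁱ` is nonincreasing along every solution, and pointwise limits of nonincreasing functions
are nonincreasing; so is `V`. For the decay, a single Lyapunov function `V⁰` already forces every
solution to `x*`: the solution stays in the compact sublevel set `{V⁰ ≤ V⁰(x(0))}`, and at any
cluster point `y` of it, continuity gives `V⁰(y) = lim V⁰(x(t)) = 0`, i.e. `y = x*`. As a locally
uniform limit of continuous functions `V` is continuous, hence `V(x(t)) → V(x*) = 0`.
-/

open Filter Topology

noncomputable section

/-- A solution of `ẋ = f(x)` with values in `X`, defined for all `t ≥ 0`. -/
def IsSolution {n : ℕ} (f : (Fin n → ℝ) → (Fin n → ℝ)) (X : Set (Fin n → ℝ))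
    (x : ℝ → (Fin n → ℝ)) : Prop :=
  (∀ t : ℝ, 0 ≤ t → x t ∈ X) ∧ ∀ t : ℝ, 0 ≤ t → HasDerivAt x (f (x t)) t

/-- A global Lyapunov function for the equilibrium `xs` of `ẋ = f(x)` on `X`. -/
def IsGlobalLyapunov {n : ℕ} (f : (Fin n → ℝ) → (Fin n → ℝ)) (X : Set (Fin n → ℝ))
    (xs : Fin n → ℝ) (V : (Fin n → ℝ) → ℝ) : Prop :=
  ContinuousOn V X ∧
  (∀ x ∈ X, 0 ≤ V x) ∧
  (∀ x ∈ X, (V x = 0 ↔ x = xs)) ∧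
  (∀ L : ℝ, IsCompact {x ∈ X | V x ≤ L}) ∧
  ∀ x : ℝ → (Fin n → ℝ), IsSolution f X x →
    AntitoneOn (fun t => V (x t)) (Set.Ici 0) ∧
    Tendsto (fun t => V (x t)) atTop (nhds 0)

/-- Global asymptotic stability of the equilibrium `xs` of `ẋ = f(x)` on `X`. -/
def IsGAS {n : ℕ} (f : (Fin n → ℝ) → (Fin n → ℝ)) (X : Set (Fin n → ℝ))
    (xs : Fin n → ℝ) : Prop :=
  (∀ ε > (0 : ℝ), ∃ δ > (0 : ℝ), ∀ x : ℝ → (Fin n → ℝ), IsSolution f X x →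
      ‖x 0 - xs‖ < δ → ∀ t ≥ (0 : ℝ), ‖x t - xs‖ < ε) ∧
  ∀ x : ℝ → (Fin n → ℝ), IsSolution f X x → Tendsto x atTop (nhds xs)

theorem ContinuousWithinAt.eq_of_tendsto_of_mapClusterPt {α Y Z : Type*} [TopologicalSpace Y]
    [TopologicalSpace Z] [T2Space Z] {W : Y → Z} {s : Set Y} {y : Y} {F : Filter α} {u : α → Y}
    {c : Z} (hW : ContinuousWithinAt W s y) (hu : ∀ᶠ a in F, u a ∈ s)
    (hy : MapClusterPt y F u) (hlim : Tendsto (W ∘ u) F (𝓝 c)) : W y = c := by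
  have hWy : Tendsto W (𝓝 y ⊓ map u F) (𝓝 (W y)) :=
    hW.tendsto.mono_left (inf_le_inf_left _ (le_principal_iff.2 hu))
  exact eq_of_nhds_neBot ((hy.tendsto_comp' hWy).clusterPt.mono hlim)

section Lyapunov

variable {n : ℕ} {f : (Fin n → ℝ) → (Fin n → ℝ)} {X : Set (Fin n → ℝ)} {xs : Fin n → ℝ}
  {W : (Fin n → ℝ) → ℝ} {x : ℝ → (Fin n → ℝ)}

theorem IsSolution.eventually_mem (hx : IsSolution f X x) : ∀ᶠ t in atTop, x t ∈ X :=
  eventually_atTop.2 ⟨0, hx.1⟩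

theorem IsGlobalLyapunov.mem_sublevel (hW : IsGlobalLyapunov f X xs W) (hx : IsSolution f X x)
    {t : ℝ} (ht : 0 ≤ t) : x t ∈ {p ∈ X | W p ≤ W (x 0)} :=
  ⟨hx.1 t ht, (hW.2.2.2.2 x hx).1 Set.self_mem_Ici ht ht⟩

theorem IsGlobalLyapunov.tendsto_of_isSolution (hW : IsGlobalLyapunov f X xs W)
    (hx : IsSolution f X x) : Tendsto x atTop (𝓝 xs) := by
  refine (hW.2.2.2.1 (W (x 0))).tendsto_nhds_of_unique_mapClusterPt
    (eventually_atTop.2 ⟨0, fun t ht => hW.mem_sublevel hx ht⟩) fun y hy hcl => ?_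
  have hWy : W y = 0 := (hW.1 y hy.1).eq_of_tendsto_of_mapClusterPt hx.eventually_mem hcl
    (hW.2.2.2.2 x hx).2
  exact (hW.2.2.1 y hy.1).1 hWy

end Lyapunov

theorem prop_limit_general {n : ℕ}
    (X : Set (Fin n → ℝ))
    (f : (Fin n → ℝ) → (Fin n → ℝ))
    (xs : Fin n → ℝ) (hxs : xs ∈ X)
    -- a sequence of global Lyapunov functions
    (V : ℕ → (Fin n → ℝ) → ℝ)
    (hV : ∀ i, IsGlobalLyapunov f X xs (V i))
    -- converging locally uniformly on `X` to `Vlim`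
    (Vlim : (Fin n → ℝ) → ℝ)
    (hconv : TendstoLocallyUniformlyOn V Vlim atTop X)
    -- `Vlim` is positive definite and globally proper
    (hnn : ∀ x ∈ X, 0 ≤ Vlim x)
    (hpd : ∀ x ∈ X, (Vlim x = 0 ↔ x = xs))
    (hproper : ∀ L : ℝ, IsCompact {x ∈ X | Vlim x ≤ L}) :
    IsGlobalLyapunov f X xs Vlim := by
  have hcont : ContinuousOn Vlim X :=
    hconv.continuousOn (Eventually.of_forall fun i => (hV i).1).frequently
  refine ⟨hcont, hnn, hpd, hproper, fun x hx => ⟨?_, ?_⟩⟩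
  · exact antitoneOn_of_frequently_antitoneOn_of_tendsto
      (Eventually.of_forall fun i => ((hV i).2.2.2.2 x hx).1).frequently
      fun t ht => hconv.tendsto_at (hx.1 t ht)
  · have hx_lim : Tendsto x atTop (𝓝[X] xs) :=
      tendsto_nhdsWithin_iff.2 ⟨(hV 0).tendsto_of_isSolution hx, hx.eventually_mem⟩
    exact (hpd xs hxs).2 rfl ▸ (hcont xs hxs).tendsto.comp hx_lim

/-- Proposition: a locally uniform limit of global Lyapunov functions which is
positive definite and globally proper is itself a global Lyapunov function. -/
theorem prop_limit {n : ℕ}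
    (X : Set (Fin n → ℝ))
    (f : (Fin n → ℝ) → (Fin n → ℝ)) (hf : ContDiffOn ℝ 1 f X)
    (xs : Fin n → ℝ) (hxs : xs ∈ X) (heq : f xs = 0)
    -- a sequence of global Lyapunov functions
    (V : ℕ → (Fin n → ℝ) → ℝ)
    (hV : ∀ i, IsGlobalLyapunov f X xs (V i))
    -- converging locally uniformly on `X` to `Vlim`
    (Vlim : (Fin n → ℝ) → ℝ)
    (hconv : TendstoLocallyUniformlyOn V Vlim atTop X)
    -- `Vlim` is positive definite and globally proper
    (hnn : ∀ x ∈ X, 0 ≤ Vlim x)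
    (hpd : ∀ x ∈ X, (Vlim x = 0 ↔ x = xs))
    (hproper : ∀ L : ℝ, IsCompact {x ∈ X | Vlim x ≤ L}) :
    IsGlobalLyapunov f X xs Vlim :=
  prop_limit_general X f xs hxs V hV Vlim hconv hnn hpd hproper

end
end

section
/- Let A ∈ ℝ^{n×n} be Metzler and suppose there exists v ∈ ℝⁿ with v > 0 (componentwise) such that vᵀ A < 0 componentwise. Then A is Hurwitz (every eigenvalue of A has negative real part), the origin is a globally asymptotically stable equilibrium of ẋ = Ax, and along every solution x(·) of ẋ = Ax both V(x) = Σᵢ vᵢ |xᵢ| and W(x) = Σᵢ vᵢ |(Ax)ᵢ| are nonincreasing in t and tend to 0 as t → ∞. -/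
open Filter Topology

noncomputable section

def Metzler {n : ℕ} (A : Matrix (Fin n) (Fin n) ℝ) : Prop :=
  ∀ i j, i ≠ j → 0 ≤ A i j

/-- `A` is Hurwitz: every (complex) eigenvalue has negative real part. -/
def Hurwitz {n : ℕ} (A : Matrix (Fin n) (Fin n) ℝ) : Prop :=
  ∀ z : ℂ, Module.End.HasEigenvalue
    (Matrix.toLin' (A.map (algebraMap ℝ ℂ))) z → z.re < 0

/-! After a diagonal shift a Metzler matrix becomes entrywise nonnegative, so
`exp (t • A) = e^{-ts} • exp (t • (A + s • 1))` is entrywise nonnegative for `t ≥ 0`. Writing a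
solution as `x t = exp ((t - s) • A) *ᵥ x s` gives `|x t| ≤ exp ((t - s) • A) *ᵥ |x s|`
entrywise, and `vᵀA ≤ -c vᵀ` propagates to `vᵀ exp (t • A) ≤ e^{-ct} vᵀ` (the derivative of
`e^{ct} vᵀ exp (t • A)` is `e^{ct} vᵀ(A + c • 1) exp (t • A) ≤ 0`). Hence `V = Σ vᵢ |xᵢ|` decays
exponentially along solutions, and so does `W x = V (A x)`, since `A x` is again a solution; as
`V` is comparable to the norm, the origin is globally asymptotically stable.
For an eigenpair `A u = z u`, the Metzler sign pattern gives `Re z • |u| ≤ A *ᵥ |u|` entrywise,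
and pairing with `v` yields `Re z · (v ⬝ |u|) ≤ (vᵀA) ⬝ |u| < 0`. -/

open NormedSpace Matrix
-- Any normed-algebra structure on matrices would do: all of them induce the entrywise topology.
open scoped Matrix.Norms.Operator

namespace Matrix

variable {ι : Type*} [Fintype ι] [DecidableEq ι]

theorem exp_apply_nonneg {N : Matrix ι ι ℝ} (hN : ∀ i j, 0 ≤ N i j) (i j : ι) :
    0 ≤ exp N i j := by
  have hsum := expSeries_summable' (𝕂 := ℝ) N
  have hentry := (entryLinearMap ℝ ℝ i j).toContinuousLinearMap.map_tsum hsum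
  simp only [LinearMap.coe_toContinuousLinearMap', entryLinearMap_apply, smul_apply,
    smul_eq_mul] at hentry
  rw [congrFun (exp_eq_tsum ℝ) N, hentry]
  exact tsum_nonneg fun k => mul_nonneg (by positivity) (pow_apply_nonneg hN k i j)

theorem exp_add_smul_one (A : Matrix ι ι ℝ) (s : ℝ) :
    exp (A + s • 1) = Real.exp s • exp A := by
  have hscalar : exp (algebraMap ℝ (Matrix ι ι ℝ) s) = algebraMap ℝ _ (Real.exp s) := by
    rw [Real.exp_eq_exp_ℝ]; exact (algebraMap_exp_comm s).symm
  rw [exp_add_of_commute _ _ ((Commute.one_right A).smul_right s), ← Algebra.algebraMap_eq_smul_one,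
    hscalar, Algebra.algebraMap_eq_smul_one, mul_smul_one]

omit [DecidableEq ι] in
theorem _root_.HasDerivAt.matrix_apply {f : ℝ → Matrix ι ι ℝ} {f' : Matrix ι ι ℝ} {t : ℝ}
    (h : HasDerivAt f f' t) (i j : ι) : HasDerivAt (fun τ => f τ i j) (f' i j) t :=
  (entryLinearMap ℝ ℝ i j).toContinuousLinearMap.hasFDerivAt.comp_hasDerivAt t h

theorem hasDerivAt_exp_smul_mulVec (A : Matrix ι ι ℝ) (y : ι → ℝ) (t : ℝ) :
    HasDerivAt (fun τ => exp (τ • A) *ᵥ y) (A *ᵥ (exp (t • A) *ᵥ y)) t := by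
  rw [mulVec_mulVec]
  exact hasDerivAt_pi.2 fun i => HasDerivAt.fun_sum fun j _ =>
    ((hasDerivAt_exp_smul_const' A t).matrix_apply i j).mul_const (y j)

theorem hasDerivAt_vecMul_exp_smul (A : Matrix ι ι ℝ) (v : ι → ℝ) (t : ℝ) :
    HasDerivAt (fun τ => v ᵥ* exp (τ • A)) (v ᵥ* A ᵥ* exp (t • A)) t := by
  rw [vecMul_vecMul]
  exact hasDerivAt_pi.2 fun j => HasDerivAt.fun_sum fun i _ =>
    ((hasDerivAt_exp_smul_const' A t).matrix_apply i j).const_mul (v i)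

end Matrix

theorem exists_pos_forall_mul_le {ι : Type*} [Finite ι] {g w : ι → ℝ} (hg : ∀ i, 0 < g i) :
    ∃ c > 0, ∀ i, c * w i ≤ g i := by
  have hnear : ∀ i, ∀ᶠ c in 𝓝 (0 : ℝ), c * w i < g i := fun i =>
    ((continuous_mul_const (w i)).tendsto' 0 0 (zero_mul _)).eventually_lt_const (hg i)
  obtain ⟨c, hcg, hc⟩ :=
    ((eventually_all.2 hnear).filter_mono nhdsWithin_le_nhds |>.and
      (self_mem_nhdsWithin (s := Set.Ioi (0 : ℝ)))).exists
  exact ⟨c, hc, fun i => (hcg i).le⟩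

section WeightedL1

variable {ι : Type*} [Fintype ι]

def weightedL1 (v u : ι → ℝ) : ℝ := ∑ i, v i * |u i|

variable {v : ι → ℝ}

theorem weightedL1_nonneg (hv : ∀ i, 0 ≤ v i) (u : ι → ℝ) : 0 ≤ weightedL1 v u :=
  Finset.sum_nonneg fun i _ => mul_nonneg (hv i) (abs_nonneg _)

theorem weightedL1_mulVec_le {M : Matrix ι ι ℝ} {a : ℝ} (hM : ∀ i j, 0 ≤ M i j)
    (hv : ∀ i, 0 ≤ v i) (hvM : ∀ j, (v ᵥ* M) j ≤ a * v j) (u : ι → ℝ) :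
    weightedL1 v (M *ᵥ u) ≤ a * weightedL1 v u := by
  calc weightedL1 v (M *ᵥ u) ≤ ∑ i, v i * ∑ j, M i j * |u j| := by
        refine Finset.sum_le_sum fun i _ => mul_le_mul_of_nonneg_left ?_ (hv i)
        refine (Finset.abs_sum_le_sum_abs _ _).trans_eq (Finset.sum_congr rfl fun j _ => ?_)
        rw [abs_mul, abs_of_nonneg (hM i j)]
    _ = ∑ j, (v ᵥ* M) j * |u j| := by
        simp only [vecMul, dotProduct, Finset.mul_sum, Finset.sum_mul, mul_assoc]
        exact Finset.sum_comm
    _ ≤ ∑ j, a * v j * |u j| :=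
        Finset.sum_le_sum fun j _ => mul_le_mul_of_nonneg_right (hvM j) (abs_nonneg _)
    _ = a * weightedL1 v u := by simp only [weightedL1, Finset.mul_sum, mul_assoc]

theorem mul_norm_le_weightedL1 {m : ℝ} (hm0 : 0 ≤ m) (hm : ∀ i, m ≤ v i) (u : ι → ℝ) :
    m * ‖u‖ ≤ weightedL1 v u := by
  have hv : ∀ i, 0 ≤ v i := fun i => hm0.trans (hm i)
  rw [← Real.norm_of_nonneg hm0, ← norm_smul, pi_norm_le_iff_of_nonneg (weightedL1_nonneg hv u)]
  intro i
  calc ‖(m • u) i‖ = m * |u i| := by simp [abs_of_nonneg hm0]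
    _ ≤ v i * |u i| := mul_le_mul_of_nonneg_right (hm i) (abs_nonneg _)
    _ ≤ weightedL1 v u :=
        Finset.single_le_sum (f := fun j => v j * |u j|)
          (fun j _ => mul_nonneg (hv j) (abs_nonneg _)) (Finset.mem_univ i)

theorem weightedL1_le_mul_norm (hv : ∀ i, 0 ≤ v i) (u : ι → ℝ) :
    weightedL1 v u ≤ (∑ i, v i) * ‖u‖ := by
  rw [weightedL1, Finset.sum_mul]
  exact Finset.sum_le_sum fun i _ =>
    mul_le_mul_of_nonneg_left ((Real.norm_eq_abs (u i)).symm ▸ norm_le_pi_norm u i) (hv i)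

end WeightedL1

namespace Metzler

variable {n : ℕ} {A : Matrix (Fin n) (Fin n) ℝ}

theorem add_smul_one (hA : Metzler A) (s : ℝ) : Metzler (A + s • 1) := fun i j hij => by
  simpa [one_apply_ne hij] using hA i j hij

theorem exists_add_smul_one_nonneg (hA : Metzler A) : ∃ s : ℝ, ∀ i j, 0 ≤ (A + s • 1) i j := by
  obtain ⟨s, hs⟩ := (Set.finite_range fun k => -A k k).bddAbove
  refine ⟨s, fun i j => ?_⟩
  rcases eq_or_ne i j with rfl | hij
  · have hi := hs (Set.mem_range_self i)
    simp only [Matrix.add_apply, Matrix.smul_apply, one_apply_eq, smul_eq_mul, mul_one]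
    linarith
  · exact hA.add_smul_one s i j hij

theorem exp_smul_apply_nonneg (hA : Metzler A) {t : ℝ} (ht : 0 ≤ t) (i j : Fin n) :
    0 ≤ exp (t • A) i j := by
  obtain ⟨s, hs⟩ := hA.exists_add_smul_one_nonneg
  have hshift : exp (t • A) = Real.exp (-(t * s)) • exp (t • (A + s • 1)) := by
    rw [smul_add, smul_smul, exp_add_smul_one, smul_smul, ← Real.exp_add, neg_add_cancel,
      Real.exp_zero, one_smul]
  rw [hshift, Matrix.smul_apply, smul_eq_mul]
  exact mul_nonneg (Real.exp_pos _).le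
    (exp_apply_nonneg (fun i j => mul_nonneg ht (hs i j)) i j)

theorem vecMul_exp_smul_le {v : Fin n → ℝ} (hA : Metzler A) (hvA : ∀ j, (v ᵥ* A) j ≤ 0)
    {t : ℝ} (ht : 0 ≤ t) (j : Fin n) : (v ᵥ* exp (t • A)) j ≤ v j := by
  have hderiv : ∀ τ, HasDerivAt (fun τ : ℝ => (v ᵥ* exp (τ • A)) j)
      ((v ᵥ* A ᵥ* exp (τ • A)) j) τ := fun τ =>
    hasDerivAt_pi.1 (hasDerivAt_vecMul_exp_smul A v τ) j
  have hanti : AntitoneOn (fun τ : ℝ => (v ᵥ* exp (τ • A)) j) (Set.Ici 0) := by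
    refine antitoneOn_of_hasDerivWithinAt_nonpos (convex_Ici 0)
      (fun τ _ => (hderiv τ).continuousAt.continuousWithinAt)
      (fun τ _ => (hderiv τ).hasDerivWithinAt) fun τ hτ => ?_
    rw [interior_Ici] at hτ
    simp only [vecMul, dotProduct]
    exact Finset.sum_nonpos fun i _ =>
      mul_nonpos_of_nonpos_of_nonneg (hvA i) (hA.exp_smul_apply_nonneg (le_of_lt hτ) i j)
  simpa using hanti Set.self_mem_Ici ht ht

theorem vecMul_exp_smul_le_exp_neg_mul {v : Fin n → ℝ} {c : ℝ} (hA : Metzler A)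
    (hvA : ∀ j, (v ᵥ* A) j ≤ -(c * v j)) {t : ℝ} (ht : 0 ≤ t) (j : Fin n) :
    (v ᵥ* exp (t • A)) j ≤ Real.exp (-(c * t)) * v j := by
  have hshift := (hA.add_smul_one c).vecMul_exp_smul_le (v := v) (fun j => by
    simp only [vecMul_add, vecMul_smul, vecMul_one, Pi.add_apply, Pi.smul_apply, smul_eq_mul]
    linarith [hvA j]) ht j
  rw [smul_add, smul_smul, exp_add_smul_one, vecMul_smul, Pi.smul_apply, smul_eq_mul] at hshift
  rw [Real.exp_neg, ← div_eq_inv_mul, le_div_iff₀ (Real.exp_pos _), mul_comm, mul_comm c]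
  exact hshift

theorem re_mul_norm_le (hA : Metzler A) {z : ℂ} {u : Fin n → ℂ}
    (hu : A.map (algebraMap ℝ ℂ) *ᵥ u = z • u) (j : Fin n) :
    z.re * ‖u j‖ ≤ ∑ k, A j k * ‖u k‖ := by
  have hrow : ∑ k, (A j k : ℂ) * u k = z * u j := by simpa [mulVec, dotProduct] using congrFun hu j
  rw [← Finset.add_sum_erase _ _ (Finset.mem_univ j)] at hrow ⊢
  have hdiag : (z - A j j) * u j = ∑ k ∈ Finset.univ.erase j, (A j k : ℂ) * u k := by
    linear_combination -hrow
  calc z.re * ‖u j‖ = A j j * ‖u j‖ + (z - A j j).re * ‖u j‖ := by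
        rw [Complex.sub_re, Complex.ofReal_re]; ring
    _ ≤ A j j * ‖u j‖ + ‖(z - A j j) * u j‖ := by
        rw [norm_mul]
        gcongr
        exact Complex.re_le_norm _
    _ ≤ A j j * ‖u j‖ + ∑ k ∈ Finset.univ.erase j, A j k * ‖u k‖ := by
        rw [hdiag]
        gcongr
        refine (norm_sum_le _ _).trans_eq (Finset.sum_congr rfl fun k hk => ?_)
        rw [norm_mul, Complex.norm_real,
          Real.norm_of_nonneg (hA j k (Finset.ne_of_mem_erase hk).symm)]

theorem hurwitz (hA : Metzler A) {v : Fin n → ℝ} (hv : ∀ i, 0 ≤ v i)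
    (hvA : ∀ j, (v ᵥ* A) j < 0) : Hurwitz A := by
  intro z hz
  obtain ⟨u, hu⟩ := hz.exists_hasEigenvector
  have heig : A.map (algebraMap ℝ ℂ) *ᵥ u = z • u := by
    simpa [toLin'_apply] using hu.apply_eq_smul
  set r : Fin n → ℝ := fun k => ‖u k‖
  obtain ⟨k, hk⟩ : ∃ k, u k ≠ 0 := by
    by_contra! h
    exact hu.2 (funext h)
  have hneg : (v ᵥ* A) ⬝ᵥ r < 0 :=
    Finset.sum_neg' (fun i _ => mul_nonpos_of_nonpos_of_nonneg (hvA i).le (norm_nonneg _))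
      ⟨k, Finset.mem_univ k, mul_neg_of_neg_of_pos (hvA k) (norm_pos_iff.2 hk)⟩
  have hle : z.re * (v ⬝ᵥ r) ≤ (v ᵥ* A) ⬝ᵥ r :=
    calc z.re * (v ⬝ᵥ r) = v ⬝ᵥ (z.re • r) := by rw [dotProduct_smul, smul_eq_mul]
      _ ≤ v ⬝ᵥ (A *ᵥ r) := Finset.sum_le_sum fun j _ =>
          mul_le_mul_of_nonneg_left (hA.re_mul_norm_le heig j) (hv j)
      _ = (v ᵥ* A) ⬝ᵥ r := dotProduct_mulVec v A r
  exact neg_of_mul_neg_left (hle.trans_lt hneg)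
    (Finset.sum_nonneg fun i _ => mul_nonneg (hv i) (norm_nonneg _))

end Metzler

section LinearSolutions

variable {n : ℕ} {A : Matrix (Fin n) (Fin n) ℝ} {x : ℝ → Fin n → ℝ}

theorem IsSolution.mulVec (hx : IsSolution (fun y => A *ᵥ y) Set.univ x) :
    IsSolution (fun y => A *ᵥ y) Set.univ (fun t => A *ᵥ x t) :=
  ⟨fun _ _ => trivial, fun t ht =>
    (mulVecLin A).toContinuousLinearMap.hasFDerivAt.comp_hasDerivAt t (hx.2 t ht)⟩

theorem IsSolution.eq_exp_smul_mulVec (hx : IsSolution (fun y => A *ᵥ y) Set.univ x)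
    {s t : ℝ} (hs : 0 ≤ s) (hst : s ≤ t) : x t = exp ((t - s) • A) *ᵥ x s := by
  have hx' : ∀ τ ∈ Set.Icc s t, HasDerivAt x (A *ᵥ x τ) τ := fun τ hτ => hx.2 τ (hs.trans hτ.1)
  have hg : ∀ τ, HasDerivAt (fun τ => exp ((τ - s) • A) *ᵥ x s)
      (A *ᵥ (exp ((τ - s) • A) *ᵥ x s)) τ := fun τ =>
    (hasDerivAt_exp_smul_mulVec A (x s) (τ - s)).comp_sub_const τ s
  refine ODE_solution_unique (v := fun _ y => A *ᵥ y)
    (fun _ => (mulVecLin A).toContinuousLinearMap.lipschitz)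
    (fun τ hτ => (hx' τ hτ).continuousAt.continuousWithinAt)
    (fun τ hτ => (hx' τ (Set.Ico_subset_Icc_self hτ)).hasDerivWithinAt)
    (fun τ _ => (hg τ).continuousAt.continuousWithinAt)
    (fun τ _ => (hg τ).hasDerivWithinAt) ?_ ⟨hst, le_rfl⟩
  simp

theorem Metzler.weightedL1_le_of_isSolution {v : Fin n → ℝ} {c : ℝ} (hA : Metzler A)
    (hv : ∀ i, 0 ≤ v i) (hvA : ∀ j, (v ᵥ* A) j ≤ -(c * v j))
    (hx : IsSolution (fun y => A *ᵥ y) Set.univ x) {s t : ℝ} (hs : 0 ≤ s) (hst : s ≤ t) :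
    weightedL1 v (x t) ≤ Real.exp (-(c * (t - s))) * weightedL1 v (x s) := by
  rw [hx.eq_exp_smul_mulVec hs hst]
  exact weightedL1_mulVec_le (hA.exp_smul_apply_nonneg (sub_nonneg.2 hst)) hv
    (hA.vecMul_exp_smul_le_exp_neg_mul hvA (sub_nonneg.2 hst)) _

end LinearSolutions

theorem antitoneOn_and_tendsto_zero_of_exp_decay {f : ℝ → ℝ} {c : ℝ} (hc : 0 < c)
    (hf0 : ∀ t, 0 ≤ f t) (hf : ∀ s t, 0 ≤ s → s ≤ t → f t ≤ Real.exp (-(c * (t - s))) * f s) :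
    AntitoneOn f (Set.Ici 0) ∧ Tendsto f atTop (𝓝 0) := by
  refine ⟨fun s hs t _ hst => (hf s t hs hst).trans (mul_le_of_le_one_left (hf0 s) ?_), ?_⟩
  · exact Real.exp_le_one_iff.2 (neg_nonpos.2 (mul_nonneg hc.le (sub_nonneg.2 hst)))
  · have hlim : Tendsto (fun t => Real.exp (-(c * t)) * f 0) atTop (𝓝 0) := by
      simpa using (Real.tendsto_exp_neg_atTop_nhds_zero.comp
        (tendsto_id.const_mul_atTop hc)).mul_const (f 0)
    refine tendsto_of_tendsto_of_tendsto_of_le_of_le' tendsto_const_nhds hlim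
      (Eventually.of_forall hf0) ?_
    filter_upwards [eventually_ge_atTop 0] with t ht
    simpa using hf 0 t le_rfl ht

theorem isGAS_zero_of_norm_comparable {n : ℕ} {f : (Fin n → ℝ) → (Fin n → ℝ)}
    {X : Set (Fin n → ℝ)} {V : (Fin n → ℝ) → ℝ} {m M : ℝ} (hm : 0 < m) (hM : 0 ≤ M)
    (hVlow : ∀ u, m * ‖u‖ ≤ V u) (hVup : ∀ u, V u ≤ M * ‖u‖)
    (hV : ∀ x, IsSolution f X x →
      AntitoneOn (fun t => V (x t)) (Set.Ici 0) ∧ Tendsto (fun t => V (x t)) atTop (𝓝 0)) :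
    IsGAS f X 0 := by
  refine ⟨fun ε hε => ⟨m * ε / (M + 1), by positivity, fun x hx hx0 t ht => ?_⟩, fun x hx => ?_⟩
  · rw [sub_zero] at hx0 ⊢
    have hδ : M * (m * ε / (M + 1)) < m * ε := by
      rw [mul_div_left_comm]
      exact mul_lt_of_lt_one_right (by positivity) ((div_lt_one (by positivity)).2 (lt_add_one M))
    refine lt_of_mul_lt_mul_left ?_ hm.le
    calc m * ‖x t‖ ≤ V (x t) := hVlow _
      _ ≤ V (x 0) := (hV x hx).1 Set.self_mem_Ici ht ht
      _ ≤ M * ‖x 0‖ := hVup _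
      _ ≤ M * (m * ε / (M + 1)) := mul_le_mul_of_nonneg_left hx0.le hM
      _ < m * ε := hδ
  · refine tendsto_zero_iff_norm_tendsto_zero.2 (squeeze_zero (fun t => norm_nonneg _)
      (fun t => (le_div_iff₀' hm).2 (hVlow (x t))) ?_)
    simpa using (hV x hx).2.div_const m

/-- A Metzler matrix admitting a positive vector `v` with `vᵀA < 0` is
Hurwitz; the origin of `ẋ = Ax` is globally asymptotically stable and both
`Σᵢ vᵢ|xᵢ|` and `Σᵢ vᵢ|(Ax)ᵢ|` decrease to `0` along solutions. -/
theorem linear_sum_separable {n : ℕ}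
    (A : Matrix (Fin n) (Fin n) ℝ) (hA : Metzler A)
    (v : Fin n → ℝ) (hv : ∀ i, 0 < v i)
    (hvA : ∀ j, (∑ i, v i * A i j) < 0) :
    Hurwitz A ∧
    IsGAS (fun x => A.mulVec x) Set.univ 0 ∧
    ∀ x : ℝ → (Fin n → ℝ), IsSolution (fun y => A.mulVec y) Set.univ x →
      (AntitoneOn (fun t => ∑ i, v i * |x t i|) (Set.Ici 0) ∧
        Tendsto (fun t => ∑ i, v i * |x t i|) atTop (nhds 0)) ∧
      (AntitoneOn (fun t => ∑ i, v i * |A.mulVec (x t) i|) (Set.Ici 0) ∧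
        Tendsto (fun t => ∑ i, v i * |A.mulVec (x t) i|) atTop (nhds 0)) := by
  have hv0 : ∀ i, 0 ≤ v i := fun i => (hv i).le
  obtain ⟨c, hc, hcA⟩ := exists_pos_forall_mul_le (w := v) fun j => neg_pos.2 (hvA j)
  obtain ⟨m, hm, hmv⟩ := exists_pos_forall_mul_le (w := 1) hv
  have hdecay (x : ℝ → Fin n → ℝ) (hx : IsSolution (fun y => A *ᵥ y) Set.univ x) :
      AntitoneOn (fun t => weightedL1 v (x t)) (Set.Ici 0) ∧
        Tendsto (fun t => weightedL1 v (x t)) atTop (𝓝 0) :=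
    antitoneOn_and_tendsto_zero_of_exp_decay hc (fun t => weightedL1_nonneg hv0 (x t))
      fun s t hs hst =>
        hA.weightedL1_le_of_isSolution hv0 (fun j => le_neg_of_le_neg (hcA j)) hx hs hst
  refine ⟨hA.hurwitz hv0 hvA, ?_, fun x hx => ⟨hdecay x hx, hdecay _ hx.mulVec⟩⟩
  exact isGAS_zero_of_norm_comparable hm (Finset.sum_nonneg fun i _ => hv0 i)
    (mul_norm_le_weightedL1 hm.le fun i => by simpa using hmv i) (weightedL1_le_mul_norm hv0) hdecay

end
end

section
/- Let X ⊆ ℝⁿ be a convex set, f : X → ℝⁿ continuously differentiable with Jacobian J(x), x* ∈ X with f(x*) = 0, v ∈ ℝⁿ with v > 0 componentwise, and Θ = diag(v). If there exists c̃ > 0 such that μ₁(Θ J(x) Θ⁻¹) ≤ −c̃ for all x ∈ X, then Σᵢ vᵢ |fᵢ(x)| ≥ c̃ Σᵢ vᵢ |xᵢ − xᵢ*| for all x ∈ X. -/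
/-!
Put `u = Θ (x - x*)` and `σ = sign u`. For any matrix `M`, column `j` contributes
`u_j (M_jj σ_j + Σ_{i≠j} M_ij σ_i) ≤ |u_j| (M_jj + Σ_{i≠j} |M_ij|)` to `σ ⬝ M u`, so
`σ ⬝ M u ≤ μ₁(M) ‖u‖₁`. The mean value theorem for the scalar function `y ↦ σ ⬝ Θ f(y)` on the
segment `[x*, x] ⊆ X` gives `σ ⬝ Θ f(x) = σ ⬝ (Θ J(z) Θ⁻¹) u ≤ -c̃ ‖u‖₁` for some `z ∈ X`,
while `-σ ⬝ Θ f(x) ≤ ‖Θ f(x)‖₁` because `|σ_i| ≤ 1`.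
-/

open Filter Topology

noncomputable section

/-- The `ℓ¹` matrix measure: `μ₁(A) = maxⱼ (Aⱼⱼ + Σ_{i≠j} |Aᵢⱼ|)`. -/
def mu1 {n : ℕ} (A : Matrix (Fin n) (Fin n) ℝ) : ℝ :=
  ⨆ j, (A j j + ∑ i ∈ Finset.univ.erase j, |A i j|)

open Finset Matrix

lemma abs_coe_sign_le_one (x : ℝ) : |(SignType.sign x : ℝ)| ≤ 1 := by
  cases SignType.sign x <;> simp

lemma coe_sign_mul_le_abs (x y : ℝ) : (SignType.sign x : ℝ) * y ≤ |y| :=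
  calc (SignType.sign x : ℝ) * y ≤ |(SignType.sign x : ℝ)| * |y| := by
        rw [← abs_mul]; exact le_abs_self _
    _ ≤ |y| := mul_le_of_le_one_left (abs_nonneg _) (abs_coe_sign_le_one x)

lemma abs_sign_dotProduct_le {ι : Type*} [Fintype ι] (u y : ι → ℝ) :
    |(fun i => (SignType.sign (u i) : ℝ)) ⬝ᵥ y| ≤ ∑ i, |y i| :=
  (abs_sum_le_sum_abs _ _).trans <| sum_le_sum fun i _ => by
    rw [abs_mul]
    exact mul_le_of_le_one_left (abs_nonneg _) (abs_coe_sign_le_one _)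

lemma le_mu1 {n : ℕ} (A : Matrix (Fin n) (Fin n) ℝ) (j : Fin n) :
    A j j + ∑ i ∈ univ.erase j, |A i j| ≤ mu1 A :=
  le_ciSup (f := fun j => A j j + ∑ i ∈ univ.erase j, |A i j|) (Set.finite_range _).bddAbove j

lemma sign_dotProduct_mulVec_le_mu1_mul {n : ℕ} (M : Matrix (Fin n) (Fin n) ℝ)
    (u : Fin n → ℝ) :
    (fun i => (SignType.sign (u i) : ℝ)) ⬝ᵥ (M *ᵥ u) ≤ mu1 M * ∑ j, |u j| := by
  have column_le (j : Fin n) :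
      ∑ i, SignType.sign (u i) * (M i j * u j) ≤ mu1 M * |u j| :=
    calc ∑ i, SignType.sign (u i) * (M i j * u j)
        = M j j * |u j| + ∑ i ∈ univ.erase j, SignType.sign (u i) * (M i j * u j) := by
          rw [← add_sum_erase _ _ (mem_univ j), mul_left_comm, sign_mul_self]
      _ ≤ M j j * |u j| + ∑ i ∈ univ.erase j, |M i j| * |u j| := by
          exact add_le_add le_rfl <| sum_le_sum fun i _ =>
            (coe_sign_mul_le_abs _ _).trans_eq (abs_mul _ _)
      _ = (M j j + ∑ i ∈ univ.erase j, |M i j|) * |u j| := by rw [add_mul, sum_mul]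
      _ ≤ mu1 M * |u j| := mul_le_mul_of_nonneg_right (le_mu1 M j) (abs_nonneg _)
  calc (fun i => (SignType.sign (u i) : ℝ)) ⬝ᵥ (M *ᵥ u)
      = ∑ j, ∑ i, SignType.sign (u i) * (M i j * u j) := by
        simp only [dotProduct, mulVec, mul_sum]
        exact sum_comm
    _ ≤ mu1 M * ∑ j, |u j| := by
        rw [mul_sum]
        exact sum_le_sum fun j _ => column_le j

lemma diagonal_mul_mul_diagonal_inv_mulVec {ι K : Type*} [Fintype ι] [DecidableEq ι] [Field K]
    (v : ι → K) (hv : ∀ i, v i ≠ 0) (A : Matrix ι ι K) (d : ι → K) :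
    (diagonal v * A * diagonal fun i => (v i)⁻¹) *ᵥ (v * d) = v * (A *ᵥ d) := by
  have inv_cancel : (diagonal fun i => (v i)⁻¹) *ᵥ (v * d) = d := by
    ext i; simp [mulVec_diagonal, hv i]
  rw [← mulVec_mulVec, inv_cancel, ← mulVec_mulVec]
  ext i; simp [mulVec_diagonal]

theorem flow_lower_bound_general {n : ℕ}
    -- convex domain
    (X : Set (Fin n → ℝ)) (hXconv : Convex ℝ X)
    -- continuously differentiable vector field with Jacobian `J`
    (f : (Fin n → ℝ) → (Fin n → ℝ))
    (J : (Fin n → ℝ) → Matrix (Fin n) (Fin n) ℝ)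
    (hf : ∀ x ∈ X, HasFDerivWithinAt f
      (LinearMap.toContinuousLinearMap (Matrix.mulVecLin (J x))) X x)
    -- equilibrium
    (xs : Fin n → ℝ) (hxs : xs ∈ X) (heq : f xs = 0)
    -- positive weight vector
    (v : Fin n → ℝ) (hv : ∀ i, 0 < v i)
    -- matrix measure bound with `Θ = diag v`
    (ct : ℝ)
    (hμ : ∀ x ∈ X,
      mu1 (Matrix.diagonal v * J x * Matrix.diagonal fun i => (v i)⁻¹) ≤ -ct) :
    ∀ x ∈ X, ct * (∑ i, v i * |x i - xs i|) ≤ ∑ i, v i * |f x i| := by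
  intro x hx
  set u : Fin n → ℝ := v * (x - xs)
  set σ : Fin n → ℝ := fun i => SignType.sign (u i)
  set M := fun z => diagonal v * J z * diagonal fun i => (v i)⁻¹
  let L : (Fin n → ℝ) →L[ℝ] ℝ := LinearMap.toContinuousLinearMap (dotProductBilin ℝ ℝ (σ * v))
  have hL (y : Fin n → ℝ) : L y = σ ⬝ᵥ (v * y) := by simp [L, dotProduct, mul_assoc]
  have weighted_abs (y : Fin n → ℝ) : ∑ i, |(v * y) i| = ∑ i, v i * |y i| := by
    simp [abs_mul, abs_of_pos (hv _)]
  obtain ⟨z, hz, hmvt⟩ := domain_mvt (f := L ∘ f)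
    (fun y hy => L.hasFDerivAt.comp_hasFDerivWithinAt y (hf y hy)) hXconv hxs hx
  have hfx : σ ⬝ᵥ (v * f x) = σ ⬝ᵥ (M z *ᵥ u) := by
    simpa [hL, heq, M, u, diagonal_mul_mul_diagonal_inv_mulVec v (fun i => (hv i).ne')] using hmvt
  calc ct * ∑ i, v i * |x i - xs i| = ct * ∑ i, |u i| := by rw [weighted_abs]; rfl
    _ ≤ -(mu1 (M z) * ∑ i, |u i|) := by
        rw [← neg_mul]
        exact mul_le_mul_of_nonneg_right (le_neg.mp (hμ z (hXconv.segment_subset hxs hx hz)))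
          (sum_nonneg fun i _ => abs_nonneg _)
    _ ≤ -(σ ⬝ᵥ (M z *ᵥ u)) := neg_le_neg (sign_dotProduct_mulVec_le_mu1_mul _ _)
    _ = -(σ ⬝ᵥ (v * f x)) := by rw [hfx]
    _ ≤ ∑ i, v i * |f x i| := by
        rw [← weighted_abs]
        exact (neg_le_abs _).trans (abs_sign_dotProduct_le _ _)

/-- If `μ₁(Θ J(x) Θ⁻¹) ≤ −c̃ < 0` on a convex set containing the equilibrium
`x*`, with `Θ = diag(v)`, then `Σᵢ vᵢ|fᵢ(x)| ≥ c̃ Σᵢ vᵢ|xᵢ − xᵢ*|`. -/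
theorem flow_lower_bound {n : ℕ}
    -- convex domain
    (X : Set (Fin n → ℝ)) (hXconv : Convex ℝ X)
    -- continuously differentiable vector field with Jacobian `J`
    (f : (Fin n → ℝ) → (Fin n → ℝ))
    (J : (Fin n → ℝ) → Matrix (Fin n) (Fin n) ℝ)
    (hf : ∀ x ∈ X, HasFDerivWithinAt f
      (LinearMap.toContinuousLinearMap (Matrix.mulVecLin (J x))) X x)
    (hJc : ContinuousOn J X)
    -- equilibrium
    (xs : Fin n → ℝ) (hxs : xs ∈ X) (heq : f xs = 0)
    -- positive weight vector
    (v : Fin n → ℝ) (hv : ∀ i, 0 < v i)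
    -- matrix measure bound with `Θ = diag v`
    (ct : ℝ) (hct : 0 < ct)
    (hμ : ∀ x ∈ X,
      mu1 (Matrix.diagonal v * J x * Matrix.diagonal fun i => (v i)⁻¹) ≤ -ct) :
    ∀ x ∈ X, ct * (∑ i, v i * |x i - xs i|) ≤ ∑ i, v i * |f x i| :=
  flow_lower_bound_general X hXconv f J hf xs hxs heq v hv ct hμ

end
end

section
/- Let (M, d) be a metric space, P : M → M a map, ζ* ∈ M a fixed point of P, and suppose there exist constants ε > 0, δ > 0, and q ∈ [0,1) such that for every ξ ∈ M: d(ζ*, P(ξ)) ≤ d(ζ*, ξ) − δ whenever d(ζ*, ξ) > ε, and d(ζ*, P(ξ)) ≤ q · d(ζ*, ξ) whenever d(ζ*, ξ) ≤ ε. Then for every ξ ∈ M, d(ζ*, Pᵏ(ξ)) → 0 as k → ∞ (where Pᵏ denotes the k-fold iterate of P). -/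
open Filter Topology

/-- Iterates of a map that strictly decreases the distance to a fixed point by
`δ` far away and contracts by factor `q < 1` nearby converge to the fixed
point. -/
theorem iterate_to_fixed_point {M : Type*} [MetricSpace M]
    (P : M → M) (ζ : M) (hfix : P ζ = ζ)
    (ε δ q : ℝ) (hε : 0 < ε) (hδ : 0 < δ) (hq0 : 0 ≤ q) (hq1 : q < 1)
    (hfar : ∀ ξ : M, ε < dist ζ ξ → dist ζ (P ξ) ≤ dist ζ ξ - δ)
    (hnear : ∀ ξ : M, dist ζ ξ ≤ ε → dist ζ (P ξ) ≤ q * dist ζ ξ) :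
    ∀ ξ : M, Tendsto (fun k : ℕ => dist ζ (P^[k] ξ)) atTop (nhds 0) := by
  intro ξ
  -- Step 1: some iterate gets within ε.
  have key : ∃ N, dist ζ (P^[N] ξ) ≤ ε := by
    by_contra h
    push_neg at h
    have hdec : ∀ k : ℕ, dist ζ (P^[k] ξ) ≤ dist ζ ξ - k * δ := by
      intro k
      induction k with
      | zero => simp
      | succ n ih =>
        have h1 := hfar (P^[n] ξ) (h n)
        rw [Function.iterate_succ_apply']
        push_cast
        linarith
    obtain ⟨k, hk⟩ := exists_nat_gt (dist ζ ξ / δ)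
    have hk' : dist ζ ξ < k * δ := (div_lt_iff₀ hδ).mp hk
    have h1 := hdec k
    have h2 := h k
    linarith
  obtain ⟨N, hN⟩ := key
  -- Step 2: geometric contraction afterwards.
  have step : ∀ m : ℕ, dist ζ (P^[N + m] ξ) ≤ q ^ m * ε := by
    intro m
    induction m with
    | zero => simpa using hN
    | succ n ih =>
      have hpow : q ^ n ≤ 1 := pow_le_one₀ hq0 hq1.le
      have hle : dist ζ (P^[N + n] ξ) ≤ ε := by nlinarith
      have h1 := hnear _ hle
      rw [show N + (n + 1) = (N + n) + 1 from rfl, Function.iterate_succ_apply']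
      calc dist ζ (P (P^[N + n] ξ)) ≤ q * dist ζ (P^[N + n] ξ) := h1
        _ ≤ q * (q ^ n * ε) := by nlinarith
        _ = q ^ (n + 1) * ε := by ring
  have h0 : Tendsto (fun m : ℕ => q ^ m * ε) atTop (nhds 0) := by
    simpa using (tendsto_pow_atTop_nhds_zero_of_lt_one hq0 hq1).mul_const ε
  have h1 : Tendsto (fun m : ℕ => dist ζ (P^[N + m] ξ)) atTop (nhds 0) :=
    squeeze_zero (fun m => dist_nonneg) step h0
  exact (tendsto_add_atTop_iff_nat N).mp (by simpa [add_comm] using h1)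
end

section
/- Consider the planar system ẋ₁ = −x₁ + x₂², ẋ₂ = −x₂ on the forward invariant set X = [0,∞)², which has unique equilibrium x* = (0,0). The function V(x) = max{ x₁/2, x₂ + x₂²/2 } is a global Lyapunov function for the origin: V is positive definite on X, its sublevel sets in X are compact, and along every solution x(·) with values in X, t ↦ V(x(t)) is nonincreasing and V(x(t)) → 0 as t → ∞. -/
open Filter Topology

noncomputable section

/-- The planar system `ẋ₁ = −x₁ + x₂², ẋ₂ = −x₂`. -/
def fEx : (Fin 2 → ℝ) → (Fin 2 → ℝ) := fun x => ![-(x 0) + (x 1) ^ 2, -(x 1)]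

/-- The nonnegative quadrant. -/
def XEx : Set (Fin 2 → ℝ) := {x | 0 ≤ x 0 ∧ 0 ≤ x 1}

/-!
The system is triangular and linear in each step: from `(a, b)`, `x₂(t) = b u` and
`x₁(t) = (a + b²) u - b² u²` with `u = e^{-t}` (uniqueness for `y' = -y + q` on `[0, ∞)` holds
since `eᵗ (y₁ - y₂)` has zero derivative). So `V(x(t))` is a fixed function of `u ∈ (0, 1]`
vanishing at `u = 0`, and it suffices that it is monotone in `u`. For `u ≤ v`, the second branch
`b u + b² u² / 2` increases; the first increases as long as `a + b² ≥ b² (u + v)`, and otherwise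
it is at most `b² u v / 2`, below the second branch at `v`.
-/

open Real Set

lemma eq_of_hasDerivAt_neg_add {g p q : ℝ → ℝ}
    (hg : ∀ τ, 0 ≤ τ → HasDerivAt g (-g τ + q τ) τ)
    (hp : ∀ τ, 0 ≤ τ → HasDerivAt p (-p τ + q τ) τ)
    (h0 : g 0 = p 0) {t : ℝ} (ht : 0 ≤ t) : g t = p t := by
  have hderiv : ∀ τ, 0 ≤ τ → HasDerivAt (fun s => exp s * (g s - p s)) 0 τ := fun τ hτ =>
    ((hasDerivAt_exp τ).mul ((hg τ hτ).sub (hp τ hτ))).congr_deriv (by rw [Pi.sub_apply]; ring)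
  have hconst := constant_of_has_deriv_right_zero
    (fun τ hτ => (hderiv τ hτ.1).continuousAt.continuousWithinAt)
    (fun τ hτ => (hderiv τ hτ.1).hasDerivWithinAt) t ⟨ht, le_rfl⟩
  simpa [h0, exp_ne_zero, sub_eq_zero] using hconst

lemma hasDerivAt_const_mul_exp_neg (c τ : ℝ) :
    HasDerivAt (fun s => c * exp (-s)) (-(c * exp (-τ))) τ :=
  ((hasDerivAt_neg τ).exp.const_mul c).congr_deriv (by ring)

/-- The solution of `ẋ = fEx x` from `(a, b)`, as a function of `u = exp (-t)`. -/
def solEx (a b u : ℝ) : Fin 2 → ℝ := ![(a + b ^ 2) * u - b ^ 2 * u ^ 2, b * u]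

lemma solEx_zero (a b : ℝ) : solEx a b 0 = 0 := by
  ext i; fin_cases i <;> simp [solEx]

lemma continuous_solEx (a b : ℝ) : Continuous (solEx a b) :=
  continuous_pi fun i => by fin_cases i <;> simp only [solEx] <;> fun_prop

lemma solEx_mem_XEx {a b u : ℝ} (ha : 0 ≤ a) (hb : 0 ≤ b) (hu₀ : 0 ≤ u) (hu₁ : u ≤ 1) :
    solEx a b u ∈ XEx := by
  constructor
  · have : (a + b ^ 2) * u - b ^ 2 * u ^ 2 = a * u + b ^ 2 * u * (1 - u) := by ring
    simp only [solEx, Matrix.cons_val_zero, this]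
    have : 0 ≤ 1 - u := by linarith
    positivity
  · simp only [solEx, Matrix.cons_val_one, Matrix.cons_val_zero]
    positivity

lemma eq_solEx_of_hasDerivAt_fEx {x : ℝ → Fin 2 → ℝ}
    (hx : ∀ t, 0 ≤ t → HasDerivAt x (fEx (x t)) t) {t : ℝ} (ht : 0 ≤ t) :
    x t = solEx (x 0 0) (x 0 1) (exp (-t)) := by
  have hx₀ : ∀ τ, 0 ≤ τ → HasDerivAt (fun s => x s 0) (-x τ 0 + x τ 1 ^ 2) τ := fun τ hτ => by
    simpa [fEx] using hasDerivAt_pi.1 (hx τ hτ) 0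
  have hx₁ : ∀ τ, 0 ≤ τ → HasDerivAt (fun s => x s 1) (-x τ 1 + 0) τ := fun τ hτ => by
    simpa [fEx] using hasDerivAt_pi.1 (hx τ hτ) 1
  have h₁ : ∀ τ, 0 ≤ τ → x τ 1 = x 0 1 * exp (-τ) := fun τ hτ =>
    eq_of_hasDerivAt_neg_add (p := fun s => x 0 1 * exp (-s)) hx₁
      (fun σ _ => (hasDerivAt_const_mul_exp_neg (x 0 1) σ).congr_deriv (by ring)) (by simp) hτ
  have h₀ : x t 0 = (x 0 0 + x 0 1 ^ 2) * exp (-t) - x 0 1 ^ 2 * exp (-t) ^ 2 := by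
    refine eq_of_hasDerivAt_neg_add
      (p := fun s => (x 0 0 + x 0 1 ^ 2) * exp (-s) - x 0 1 ^ 2 * exp (-s) ^ 2)
      hx₀ (fun σ hσ => ?_) (by simp) ht
    have hsq := ((hasDerivAt_neg σ).exp.pow 2).const_mul (x 0 1 ^ 2)
    refine ((hasDerivAt_const_mul_exp_neg (x 0 0 + x 0 1 ^ 2) σ).sub hsq).congr_deriv ?_
    rw [h₁ σ hσ]
    ring
  ext i
  fin_cases i
  · simpa [solEx] using h₀
  · simpa [solEx] using h₁ t ht

lemma fEx_eq_zero_iff {y : Fin 2 → ℝ} : fEx y = 0 ↔ y = 0 := by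
  constructor
  · intro hy
    have h₁ : y 1 = 0 := by simpa [fEx] using congrFun hy 1
    have h₀ : y 0 = 0 := by simpa [fEx, h₁] using congrFun hy 0
    ext i; fin_cases i <;> simp [h₀, h₁]
  · rintro rfl
    ext i; fin_cases i <;> simp [fEx]

def lyapEx (z : Fin 2 → ℝ) : ℝ := max (z 0 / 2) (z 1 + z 1 ^ 2 / 2)

lemma continuous_lyapEx : Continuous lyapEx := by
  unfold lyapEx; fun_prop

lemma lyapEx_nonneg {z : Fin 2 → ℝ} (hz : z ∈ XEx) : 0 ≤ lyapEx z :=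
  le_max_of_le_left (div_nonneg hz.1 zero_le_two)

lemma lyapEx_eq_zero_iff {z : Fin 2 → ℝ} (hz : z ∈ XEx) : lyapEx z = 0 ↔ z = 0 := by
  constructor
  · intro hV
    obtain ⟨hV₀, hV₁⟩ := max_le_iff.1 hV.le
    have h₀ : z 0 = 0 := by linarith [hz.1]
    have h₁ : z 1 = 0 := by nlinarith [hz.2]
    ext i; fin_cases i <;> simp [h₀, h₁]
  · rintro rfl
    simp [lyapEx]

lemma isClosed_XEx : IsClosed XEx :=
  (isClosed_le continuous_const (continuous_apply 0)).inter
    (isClosed_le continuous_const (continuous_apply 1))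

lemma isCompact_lyapEx_sublevel (L : ℝ) : IsCompact {z ∈ XEx | lyapEx z ≤ L} := by
  refine (isCompact_Icc (a := 0) (b := fun _ => 2 * L)).of_isClosed_subset
    (isClosed_XEx.inter (isClosed_le continuous_lyapEx continuous_const)) ?_
  rintro z ⟨hz, hL⟩
  obtain ⟨h₀, h₁⟩ := max_le_iff.1 hL
  refine ⟨Fin.forall_fin_two.2 hz, Fin.forall_fin_two.2 ⟨?_, ?_⟩⟩
  · show z 0 ≤ 2 * L
    linarith
  · show z 1 ≤ 2 * L
    nlinarith [hz.1, hz.2]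

lemma monotoneOn_lyapEx_solEx (a : ℝ) {b : ℝ} (hb : 0 ≤ b) :
    MonotoneOn (fun u => lyapEx (solEx a b u)) (Ici 0) := by
  intro u (hu : 0 ≤ u) v (hv : 0 ≤ v) huv
  simp only [lyapEx, solEx, Matrix.cons_val_zero, Matrix.cons_val_one]
  have hsecond : b * u + (b * u) ^ 2 / 2 ≤ b * v + (b * v) ^ 2 / 2 := by
    have := mul_le_mul_of_nonneg_left huv hb
    have := pow_le_pow_left₀ (mul_nonneg hb hu) this 2
    linarith
  refine max_le ?_ (hsecond.trans (le_max_right _ _))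
  rcases le_total (a + b ^ 2) (b ^ 2 * (u + v)) with h | h
  · refine le_trans ?_ (le_max_right _ _)
    calc ((a + b ^ 2) * u - b ^ 2 * u ^ 2) / 2
        ≤ (b ^ 2 * (u + v) * u - b ^ 2 * u ^ 2) / 2 := by gcongr
      _ = (b * u) * (b * v) / 2 := by ring
      _ ≤ (b * v) * (b * v) / 2 := by gcongr
      _ = (b * v) ^ 2 / 2 := by ring
      _ ≤ b * v + (b * v) ^ 2 / 2 := by linarith [mul_nonneg hb hv]
  · refine le_trans ?_ (le_max_left _ _)
    nlinarith [mul_nonneg (sub_nonneg.2 huv) (sub_nonneg.2 h)]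

lemma tendsto_lyapEx_solEx_zero (a b : ℝ) :
    Tendsto (fun u => lyapEx (solEx a b u)) (𝓝 0) (𝓝 0) := by
  simpa [Function.comp_def, solEx_zero, lyapEx] using
    ((continuous_lyapEx.comp (continuous_solEx a b)).tendsto 0)

/-- For the planar system on the forward invariant quadrant, on which the
origin is the unique equilibrium, `V(x) = max{x₁/2, x₂ + x₂²/2}` is a global
Lyapunov function for the origin. -/
theorem example_max_separable :
    -- `XEx` is forward invariant
    (∀ x : ℝ → (Fin 2 → ℝ), (∀ t : ℝ, 0 ≤ t → HasDerivAt x (fEx (x t)) t) →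
      x 0 ∈ XEx → ∀ t : ℝ, 0 ≤ t → x t ∈ XEx) ∧
    -- the origin is the unique equilibrium in `XEx`
    (∀ y ∈ XEx, fEx y = 0 → y = 0) ∧
    -- `V` is a global Lyapunov function for the origin on `XEx`
    IsGlobalLyapunov fEx XEx 0 (fun z => max (z 0 / 2) (z 1 + (z 1) ^ 2 / 2)) := by
  refine ⟨fun x hx hx₀ t ht => ?_, fun y _ => fEx_eq_zero_iff.1, continuous_lyapEx.continuousOn,
    fun z => lyapEx_nonneg, fun z => lyapEx_eq_zero_iff, isCompact_lyapEx_sublevel,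
    fun x ⟨hmem, hx⟩ => ⟨?_, ?_⟩⟩
  · rw [eq_solEx_of_hasDerivAt_fEx hx ht]
    exact solEx_mem_XEx hx₀.1 hx₀.2 (exp_pos _).le (exp_le_one_iff.2 (by linarith))
  · intro s hs t ht hst
    show lyapEx (x t) ≤ lyapEx (x s)
    rw [eq_solEx_of_hasDerivAt_fEx hx hs, eq_solEx_of_hasDerivAt_fEx hx ht]
    exact monotoneOn_lyapEx_solEx _ (hmem 0 le_rfl).2 (exp_pos _).le (exp_pos _).le
      (exp_le_exp.2 (by linarith))
  · refine ((tendsto_lyapEx_solEx_zero (x 0 0) (x 0 1)).comp tendsto_exp_neg_atTop_nhds_zero).congr' ?_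
    filter_upwards [eventually_ge_atTop 0] with t ht
    rw [eq_solEx_of_hasDerivAt_fEx hx ht]
    rfl

end
end

section
/- Consider the three-agent system on ℝ³: ẋ₁ = −α₁(x₁) + ρ₁(x₃ − x₁), ẋ₂ = ρ₂(x₁ − x₂) + ρ₃(x₃ − x₂), ẋ₃ = ρ₄(x₂ − x₃), where α₁ : ℝ → ℝ is continuously differentiable, strictly increasing with α₁(0) = 0 and α₁'(σ) ≥ c̲₀ > 0 for all σ; each ρᵢ : ℝ → ℝ is continuously differentiable, strictly increasing with ρᵢ(0) = 0; ρ₁'(σ) ≤ c̄₁ and ρ₃'(σ) ≤ c̄₃ for all σ with c̄₁, c̄₃ > 0; and ρ₂'(σ) ≥ c̲₂ > 0 and ρ₄'(σ) ≥ c̲₄ > 0 for all σ. Let ε₁, ε₂ > 0 satisfy c̲₀ > (ε₁ + ε₂) c̄₁ and ε₁ c̲₂ > ε₂ c̄₃, and set w = (1, 1 + ε₁, 1 + ε₁ + ε₂)ᵀ and c = max{ (ε₁ + ε₂) c̄₁ − c̲₀, ε₂ c̄₃ − ε₁ c̲₂, −ε₂ c̲₄ }. Then c < 0 and the Jacobian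 J(x) of the system satisfies J(x) w ≤ c 𝟙 componentwise for all x ∈ ℝ³; consequently the origin is globally asymptotically stable and V(x) = max{ |x₁|, |x₂|, |x₃| } is a global Lyapunov function for the origin. -/
open Filter Topology

noncomputable section

/-- The three-agent rendezvous vector field. -/
def fAgents (α ρ1 ρ2 ρ3 ρ4 : ℝ → ℝ) : (Fin 3 → ℝ) → (Fin 3 → ℝ) := fun x =>
  ![-(α (x 0)) + ρ1 (x 2 - x 0),
    ρ2 (x 0 - x 1) + ρ3 (x 2 - x 1),
    ρ4 (x 1 - x 2)]

/-- Its Jacobian, expressed through the derivatives of `α, ρ₁, …, ρ₄`. -/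
def JAgents (α' ρ1' ρ2' ρ3' ρ4' : ℝ → ℝ) (x : Fin 3 → ℝ) :
    Matrix (Fin 3) (Fin 3) ℝ :=
  !![-(α' (x 0)) - ρ1' (x 2 - x 0), 0, ρ1' (x 2 - x 0);
     ρ2' (x 0 - x 1), -(ρ2' (x 0 - x 1)) - ρ3' (x 2 - x 1), ρ3' (x 2 - x 1);
     0, ρ4' (x 1 - x 2), -(ρ4' (x 1 - x 2))]

/-!
The weighted max-norm `‖x / w‖` contracts. On a face `x i = ± m * w i` of the box
`|x j| ≤ m * w j`, the mean value theorem and the monotonicity of the `ρ`'s bound the outward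
component of the field by `m * c`, which is at most `(c / max w) * m * w i`. So along a solution
the upper right Dini derivative of `‖x t / w‖` is at most `(c / max w) * ‖x t / w‖`, and
Grönwall's inequality gives exponential decay, hence global asymptotic stability. For
`ε₁ = ε₂ = 0` the same face estimates give rate `0` for the unweighted max-norm, which is `V`.
-/

open Set

section BoxContraction

variable {ι : Type*} [Fintype ι]

/-- A derivative-free substitute for the weighted row-sum bound `J(x) v ≤ μ v` on the Jacobian,
tested on the faces of the boxes `|y j| ≤ m * v j`. -/
def InwardOnBoxes (F : (ι → ℝ) → ι → ℝ) (v : ι → ℝ) (μ : ℝ) : Prop :=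
  ∀ (y : ι → ℝ) (m : ℝ), 0 ≤ m → (∀ j, |y j| ≤ m * v j) → ∀ i,
    (y i = m * v i → F y i ≤ μ * (m * v i)) ∧ (y i = -(m * v i) → -F y i ≤ μ * (m * v i))

theorem eventually_lt_add_mul_sub_of_hasDerivAt {u : ℝ → ℝ} {d t m r : ℝ}
    (hu : HasDerivAt u d t) (hm : u t ≤ m) (hd : u t = m → d < r) :
    ∀ᶠ z in 𝓝[>] t, u z < m + r * (z - t) := by
  rcases hm.lt_or_eq with hlt | heq
  · have hcont : ContinuousAt (fun z => m + r * (z - t)) t := by fun_prop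
    exact nhdsWithin_le_nhds (hu.continuousAt.eventually_lt hcont (by simpa using hlt))
  · filter_upwards [hu.hasDerivWithinAt.limsup_slope_le' (lt_irrefl t) (hd heq),
      self_mem_nhdsWithin] with z hslope hz
    rw [slope_def_field, div_lt_iff₀ (sub_pos.2 hz)] at hslope
    linarith

theorem eventually_abs_lt_add_mul_sub_of_hasDerivAt {u : ℝ → ℝ} {d t m r : ℝ}
    (hu : HasDerivAt u d t) (hm : |u t| ≤ m) (hpos : u t = m → d < r)
    (hneg : u t = -m → -d < r) :
    ∀ᶠ z in 𝓝[>] t, |u z| < m + r * (z - t) := by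
  obtain ⟨hm₁, hm₂⟩ := abs_le.1 hm
  have hneg' : -u t = m → -d < r := fun h => hneg (by linarith)
  filter_upwards [eventually_lt_add_mul_sub_of_hasDerivAt hu hm₂ hpos,
    eventually_lt_add_mul_sub_of_hasDerivAt (u := fun z => -u z) hu.neg (by linarith) hneg']
    with z h₁ h₂
  exact abs_lt.2 ⟨by linarith, h₁⟩

theorem abs_le_norm_div_mul {v : ι → ℝ} (hv : ∀ i, 0 < v i) (y : ι → ℝ) (i : ι) :
    |y i| ≤ ‖y / v‖ * v i := by
  rw [← div_le_iff₀ (hv i), ← abs_of_pos (hv i), ← abs_div]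
  exact norm_le_pi_norm (y / v) i

theorem eventually_slope_norm_div_lt {F : (ι → ℝ) → ι → ℝ} {v : ι → ℝ} {μ : ℝ}
    (hv : ∀ i, 0 < v i) (hF : InwardOnBoxes F v μ) {x : ℝ → ι → ℝ} {τ r : ℝ}
    (hx : HasDerivAt x (F (x τ)) τ) (hr : μ * ‖x τ / v‖ < r) :
    ∀ᶠ z in 𝓝[>] τ, (z - τ)⁻¹ * (‖x z / v‖ - ‖x τ / v‖) < r := by
  set m := ‖x τ / v‖
  have hcoord : ∀ i, ∀ᶠ z in 𝓝[>] τ, ‖(x z / v) i‖ < m + r * (z - τ) := by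
    intro i
    have hu : HasDerivAt (fun z => x z i / v i) (F (x τ) i / v i) τ :=
      ((hasDerivAt_pi.1 hx) i).div_const (v i)
    have hrv : μ * m * v i < r * v i := mul_lt_mul_of_pos_right hr (hv i)
    obtain ⟨hFpos, hFneg⟩ := hF (x τ) m (norm_nonneg _) (abs_le_norm_div_mul hv (x τ)) i
    refine eventually_abs_lt_add_mul_sub_of_hasDerivAt hu (norm_le_pi_norm (x τ / v) i)
      (fun h => ?_) (fun h => ?_)
    · rw [Pi.div_apply, div_eq_iff (hv i).ne'] at h
      rw [div_lt_iff₀ (hv i)]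
      linarith [hFpos h]
    · rw [Pi.div_apply, div_eq_iff (hv i).ne', neg_mul] at h
      rw [← neg_div, div_lt_iff₀ (hv i)]
      linarith [hFneg h]
  have hpos : ∀ᶠ z in 𝓝[>] τ, 0 < m + r * (z - τ) :=
    eventually_lt_add_mul_sub_of_hasDerivAt (hasDerivAt_const τ 0) (norm_nonneg _)
      (fun h => by simpa [← h] using hr)
  filter_upwards [eventually_all.2 hcoord, hpos, self_mem_nhdsWithin] with z hz hpos hzτ
  have := (pi_norm_lt_iff hpos).2 hz
  rw [inv_mul_lt_iff₀ (sub_pos.2 hzτ)]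
  linarith

theorem norm_div_le_mul_exp_of_inwardOnBoxes {F : (ι → ℝ) → ι → ℝ} {v : ι → ℝ} {μ : ℝ}
    (hv : ∀ i, 0 < v i) (hF : InwardOnBoxes F v μ) {x : ℝ → ι → ℝ}
    (hx : ∀ t, 0 ≤ t → HasDerivAt x (F (x t)) t) {s t : ℝ} (hs : 0 ≤ s) (hst : s ≤ t) :
    ‖x t / v‖ ≤ ‖x s / v‖ * Real.exp (μ * (t - s)) := by
  have hcont : ContinuousOn (fun τ => ‖x τ / v‖) (Icc s t) := fun τ hτ =>
    ((hx τ (hs.trans hτ.1)).continuousAt.div_const v).norm.continuousWithinAt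
  have hdini : ∀ τ ∈ Ico s t, ∀ r, μ * ‖x τ / v‖ < r →
      ∃ᶠ z in 𝓝[>] τ, (z - τ)⁻¹ * (‖x z / v‖ - ‖x τ / v‖) < r := fun τ hτ r hr =>
    (eventually_slope_norm_div_lt hv hF (hx τ (hs.trans hτ.1)) hr).frequently
  have := le_gronwallBound_of_liminf_deriv_right_le (ε := 0) hcont hdini le_rfl
    (fun τ _ => (add_zero _).ge) t ⟨hst, le_rfl⟩
  rwa [gronwallBound_ε0] at this

theorem norm_div_le_norm {v : ι → ℝ} (hv : ∀ i, 1 ≤ v i) (y : ι → ℝ) : ‖y / v‖ ≤ ‖y‖ :=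
  (pi_norm_le_iff_of_nonneg (norm_nonneg y)).2 fun i => by
    rw [Pi.div_apply, norm_div]
    exact (div_le_self (norm_nonneg _) ((hv i).trans (le_abs_self _))).trans (norm_le_pi_norm y i)

theorem norm_le_mul_norm_div [Nonempty ι] {v : ι → ℝ} {W : ℝ} (hv : ∀ i, 0 < v i)
    (hW : ∀ i, v i ≤ W) (y : ι → ℝ) : ‖y‖ ≤ W * ‖y / v‖ :=
  (pi_norm_le_iff_of_nonempty y).2 fun i => by
    rw [Real.norm_eq_abs, mul_comm]
    exact (abs_le_norm_div_mul hv y i).trans (mul_le_mul_of_nonneg_left (hW i) (norm_nonneg _))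

theorem norm_le_mul_exp_of_inwardOnBoxes [Nonempty ι] {F : (ι → ℝ) → ι → ℝ} {v : ι → ℝ}
    {W μ : ℝ} (hv : ∀ i, 1 ≤ v i) (hW : ∀ i, v i ≤ W) (hF : InwardOnBoxes F v μ)
    {x : ℝ → ι → ℝ} (hx : ∀ t, 0 ≤ t → HasDerivAt x (F (x t)) t) {t : ℝ} (ht : 0 ≤ t) :
    ‖x t‖ ≤ W * ‖x 0‖ * Real.exp (μ * t) := by
  have hv₀ : ∀ i, 0 < v i := fun i => one_pos.trans_le (hv i)
  have hW₀ : 0 ≤ W := (hv₀ (Classical.arbitrary ι)).le.trans (hW _)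
  calc ‖x t‖ ≤ W * ‖x t / v‖ := norm_le_mul_norm_div hv₀ hW (x t)
    _ ≤ W * (‖x 0 / v‖ * Real.exp (μ * (t - 0))) :=
      mul_le_mul_of_nonneg_left (norm_div_le_mul_exp_of_inwardOnBoxes hv₀ hF hx le_rfl ht) hW₀
    _ ≤ W * (‖x 0‖ * Real.exp (μ * t)) := by
      rw [sub_zero]
      gcongr
      exact norm_div_le_norm hv (x 0)
    _ = W * ‖x 0‖ * Real.exp (μ * t) := (mul_assoc _ _ _).symm

end BoxContraction

section Stability

variable {n : ℕ} {F : (Fin n → ℝ) → Fin n → ℝ}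

theorem isGAS_of_norm_le_mul_exp {K μ : ℝ} (hK : 0 < K) (hμ : μ < 0)
    (hbound : ∀ x, IsSolution F univ x → ∀ t, 0 ≤ t → ‖x t‖ ≤ K * ‖x 0‖ * Real.exp (μ * t)) :
    IsGAS F univ 0 := by
  refine ⟨fun ε hε => ⟨ε / K, div_pos hε hK, fun x hx hx0 t ht => ?_⟩, fun x hx => ?_⟩
  · rw [sub_zero] at hx0 ⊢
    calc ‖x t‖ ≤ K * ‖x 0‖ * Real.exp (μ * t) := hbound x hx t ht
      _ ≤ K * ‖x 0‖ := mul_le_of_le_one_right (by positivity)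
          (Real.exp_le_one_iff.2 (mul_nonpos_of_nonpos_of_nonneg hμ.le ht))
      _ < K * (ε / K) := by gcongr
      _ = ε := mul_div_cancel₀ ε hK.ne'
  · have hexp : Tendsto (fun t => K * ‖x 0‖ * Real.exp (μ * t)) atTop (𝓝 0) := by
      simpa using (Real.tendsto_exp_atBot.comp (tendsto_id.const_mul_atTop_of_neg hμ)).const_mul
        (K * ‖x 0‖)
    exact tendsto_zero_iff_norm_tendsto_zero.2 (squeeze_zero' (.of_forall fun t => norm_nonneg _)
      ((eventually_ge_atTop 0).mono (hbound x hx)) hexp)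

theorem isGlobalLyapunov_norm
    (hanti : ∀ x, IsSolution F univ x → AntitoneOn (fun t => ‖x t‖) (Ici 0))
    (hattr : ∀ x, IsSolution F univ x → Tendsto x atTop (𝓝 0)) :
    IsGlobalLyapunov F univ 0 (fun x => ‖x‖) := by
  refine ⟨continuous_norm.continuousOn, fun x _ => norm_nonneg x, fun x _ => norm_eq_zero,
    fun L => ?_, fun x hx => ⟨hanti x hx, tendsto_zero_iff_norm_tendsto_zero.1 (hattr x hx)⟩⟩
  simpa [Metric.closedBall] using isCompact_closedBall (0 : Fin n → ℝ) L

end Stability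

section Agents

variable {g g' : ℝ → ℝ} {d : ℝ}

theorem sub_le_mul_sub_of_hasDerivAt_le (hg : ∀ s, HasDerivAt g (g' s) s) (hd : ∀ s, g' s ≤ d)
    {x y : ℝ} (hxy : x ≤ y) : g y - g x ≤ d * (y - x) :=
  image_sub_le_mul_sub_of_deriv_le (fun s => (hg s).differentiableAt)
    (fun s => (hg s).deriv ▸ hd s) hxy

theorem mul_sub_le_sub_of_le_hasDerivAt (hg : ∀ s, HasDerivAt g (g' s) s) (hd : ∀ s, d ≤ g' s)
    {x y : ℝ} (hxy : x ≤ y) : d * (y - x) ≤ g y - g x :=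
  mul_sub_le_image_sub_of_le_deriv (fun s => (hg s).differentiableAt)
    (fun s => (hg s).deriv ▸ hd s) hxy

variable {α ρ1 ρ2 ρ3 ρ4 α' ρ1' ρ2' ρ3' ρ4' : ℝ → ℝ} {c0 cb1 c2 cb3 c4 a b m : ℝ}
  {y : Fin 3 → ℝ}

theorem fAgents_face_bound_zero (hα : ∀ s, HasDerivAt α (α' s) s) (hα0 : α 0 = 0)
    (hαlb : ∀ s, c0 ≤ α' s) (hρ1 : ∀ s, HasDerivAt ρ1 (ρ1' s) s) (hρ10 : ρ1 0 = 0)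
    (hρ1m : Monotone ρ1) (hρ1ub : ∀ s, ρ1' s ≤ cb1) (hm : 0 ≤ m) (hab : 0 ≤ a + b)
    (hy2 : |y 2| ≤ m * (1 + a + b)) :
    (y 0 = m → fAgents α ρ1 ρ2 ρ3 ρ4 y 0 ≤ m * ((a + b) * cb1 - c0)) ∧
    (y 0 = -m → -fAgents α ρ1 ρ2 ρ3 ρ4 y 0 ≤ m * ((a + b) * cb1 - c0)) := by
  obtain ⟨hy2l, hy2u⟩ := abs_le.1 hy2
  have hσ : 0 ≤ m * (a + b) := mul_nonneg hm hab
  refine ⟨fun h => ?_, fun h => ?_⟩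
  · have hα_m := mul_sub_le_sub_of_le_hasDerivAt hα hαlb hm
    have hρ1_m := sub_le_mul_sub_of_hasDerivAt_le hρ1 hρ1ub hσ
    have hρ1_y := hρ1m (show y 2 - m ≤ m * (a + b) by linarith)
    simp only [fAgents, Matrix.cons_val_zero, h]
    linarith
  · have hα_m := mul_sub_le_sub_of_le_hasDerivAt hα hαlb (neg_nonpos.2 hm)
    have hρ1_m := sub_le_mul_sub_of_hasDerivAt_le hρ1 hρ1ub (neg_nonpos.2 hσ)
    have hρ1_y := hρ1m (show -(m * (a + b)) ≤ y 2 - -m by linarith)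
    simp only [fAgents, Matrix.cons_val_zero, h]
    linarith

theorem fAgents_face_bound_one (hρ2 : ∀ s, HasDerivAt ρ2 (ρ2' s) s) (hρ20 : ρ2 0 = 0)
    (hρ2m : Monotone ρ2) (hρ2lb : ∀ s, c2 ≤ ρ2' s) (hρ3 : ∀ s, HasDerivAt ρ3 (ρ3' s) s)
    (hρ30 : ρ3 0 = 0) (hρ3m : Monotone ρ3) (hρ3ub : ∀ s, ρ3' s ≤ cb3) (hm : 0 ≤ m) (ha : 0 ≤ a)
    (hb : 0 ≤ b) (hy0 : |y 0| ≤ m) (hy2 : |y 2| ≤ m * (1 + a + b)) :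
    (y 1 = m * (1 + a) → fAgents α ρ1 ρ2 ρ3 ρ4 y 1 ≤ m * (b * cb3 - a * c2)) ∧
    (y 1 = -(m * (1 + a)) → -fAgents α ρ1 ρ2 ρ3 ρ4 y 1 ≤ m * (b * cb3 - a * c2)) := by
  obtain ⟨hy0l, hy0u⟩ := abs_le.1 hy0
  obtain ⟨hy2l, hy2u⟩ := abs_le.1 hy2
  have hma : 0 ≤ m * a := mul_nonneg hm ha
  have hmb : 0 ≤ m * b := mul_nonneg hm hb
  refine ⟨fun h => ?_, fun h => ?_⟩
  · have hρ2_m := mul_sub_le_sub_of_le_hasDerivAt hρ2 hρ2lb (neg_nonpos.2 hma)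
    have hρ2_y := hρ2m (show y 0 - y 1 ≤ -(m * a) by linarith)
    have hρ3_m := sub_le_mul_sub_of_hasDerivAt_le hρ3 hρ3ub hmb
    have hρ3_y := hρ3m (show y 2 - y 1 ≤ m * b by linarith)
    simp only [fAgents, Matrix.cons_val_one, Matrix.cons_val_zero]
    linarith
  · have hρ2_m := mul_sub_le_sub_of_le_hasDerivAt hρ2 hρ2lb hma
    have hρ2_y := hρ2m (show m * a ≤ y 0 - y 1 by linarith)
    have hρ3_m := sub_le_mul_sub_of_hasDerivAt_le hρ3 hρ3ub (neg_nonpos.2 hmb)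
    have hρ3_y := hρ3m (show -(m * b) ≤ y 2 - y 1 by linarith)
    simp only [fAgents, Matrix.cons_val_one, Matrix.cons_val_zero]
    linarith

theorem fAgents_face_bound_two (hρ4 : ∀ s, HasDerivAt ρ4 (ρ4' s) s) (hρ40 : ρ4 0 = 0)
    (hρ4m : Monotone ρ4) (hρ4lb : ∀ s, c4 ≤ ρ4' s) (hm : 0 ≤ m) (hb : 0 ≤ b)
    (hy1 : |y 1| ≤ m * (1 + a)) :
    (y 2 = m * (1 + a + b) → fAgents α ρ1 ρ2 ρ3 ρ4 y 2 ≤ m * -(b * c4)) ∧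
    (y 2 = -(m * (1 + a + b)) → -fAgents α ρ1 ρ2 ρ3 ρ4 y 2 ≤ m * -(b * c4)) := by
  obtain ⟨hy1l, hy1u⟩ := abs_le.1 hy1
  have hmb : 0 ≤ m * b := mul_nonneg hm hb
  refine ⟨fun h => ?_, fun h => ?_⟩
  · have hρ4_m := mul_sub_le_sub_of_le_hasDerivAt hρ4 hρ4lb (neg_nonpos.2 hmb)
    have hρ4_y := hρ4m (show y 1 - y 2 ≤ -(m * b) by linarith)
    simp only [fAgents, Matrix.cons_val_two, Matrix.tail_cons, Matrix.head_cons]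
    linarith
  · have hρ4_m := mul_sub_le_sub_of_le_hasDerivAt hρ4 hρ4lb hmb
    have hρ4_y := hρ4m (show m * b ≤ y 1 - y 2 by linarith)
    simp only [fAgents, Matrix.cons_val_two, Matrix.tail_cons, Matrix.head_cons]
    linarith

theorem inwardOnBoxes_fAgents (hα : ∀ s, HasDerivAt α (α' s) s) (hα0 : α 0 = 0)
    (hρ1 : ∀ s, HasDerivAt ρ1 (ρ1' s) s) (hρ10 : ρ1 0 = 0) (hρ1m : Monotone ρ1)
    (hρ2 : ∀ s, HasDerivAt ρ2 (ρ2' s) s) (hρ20 : ρ2 0 = 0) (hρ2m : Monotone ρ2)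
    (hρ3 : ∀ s, HasDerivAt ρ3 (ρ3' s) s) (hρ30 : ρ3 0 = 0) (hρ3m : Monotone ρ3)
    (hρ4 : ∀ s, HasDerivAt ρ4 (ρ4' s) s) (hρ40 : ρ4 0 = 0) (hρ4m : Monotone ρ4)
    (hαlb : ∀ s, c0 ≤ α' s) (hρ1ub : ∀ s, ρ1' s ≤ cb1) (hρ2lb : ∀ s, c2 ≤ ρ2' s)
    (hρ3ub : ∀ s, ρ3' s ≤ cb3) (hρ4lb : ∀ s, c4 ≤ ρ4' s) (a b μ : ℝ) (ha : 0 ≤ a) (hb : 0 ≤ b)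
    (hk0 : (a + b) * cb1 - c0 ≤ μ) (hk1 : b * cb3 - a * c2 ≤ μ * (1 + a))
    (hk2 : -(b * c4) ≤ μ * (1 + a + b)) :
    InwardOnBoxes (fAgents α ρ1 ρ2 ρ3 ρ4) ![1, 1 + a, 1 + a + b] μ := by
  intro y m hm hy i
  have hy0 : |y 0| ≤ m := by simpa using hy 0
  have hy1 : |y 1| ≤ m * (1 + a) := by simpa using hy 1
  have hy2 : |y 2| ≤ m * (1 + a + b) := by simpa using hy 2
  fin_cases i
  · obtain ⟨hpos, hneg⟩ := fAgents_face_bound_zero (ρ2 := ρ2) (ρ3 := ρ3) (ρ4 := ρ4) hα hα0 hαlb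
      hρ1 hρ10 hρ1m hρ1ub hm (add_nonneg ha hb) hy2
    have := mul_le_mul_of_nonneg_left hk0 hm
    simp only [Fin.zero_eta, Matrix.cons_val_zero, mul_one]
    exact ⟨fun h => (hpos h).trans (by linarith), fun h => (hneg h).trans (by linarith)⟩
  · obtain ⟨hpos, hneg⟩ := fAgents_face_bound_one (α := α) (ρ1 := ρ1) (ρ4 := ρ4) hρ2 hρ20 hρ2m
      hρ2lb hρ3 hρ30 hρ3m hρ3ub hm ha hb hy0 hy2
    have := mul_le_mul_of_nonneg_left hk1 hm
    simp only [Fin.mk_one, Matrix.cons_val_one, Matrix.cons_val_zero]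
    exact ⟨fun h => (hpos h).trans (by linarith), fun h => (hneg h).trans (by linarith)⟩
  · obtain ⟨hpos, hneg⟩ := fAgents_face_bound_two (α := α) (ρ1 := ρ1) (ρ2 := ρ2) (ρ3 := ρ3) hρ4
      hρ40 hρ4m hρ4lb hm hb hy1
    have := mul_le_mul_of_nonneg_left hk2 hm
    simp only [Fin.reduceFinMk, Matrix.cons_val_two, Matrix.tail_cons, Matrix.head_cons]
    exact ⟨fun h => (hpos h).trans (by linarith), fun h => (hneg h).trans (by linarith)⟩

theorem JAgents_mulVec_le (hαlb : ∀ s, c0 ≤ α' s) (hρ1ub : ∀ s, ρ1' s ≤ cb1)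
    (hρ2lb : ∀ s, c2 ≤ ρ2' s) (hρ3ub : ∀ s, ρ3' s ≤ cb3) (hρ4lb : ∀ s, c4 ≤ ρ4' s)
    (ha : 0 ≤ a) (hb : 0 ≤ b) (x : Fin 3 → ℝ) (i : Fin 3) :
    (JAgents α' ρ1' ρ2' ρ3' ρ4' x).mulVec ![1, 1 + a, 1 + a + b] i ≤
      max ((a + b) * cb1 - c0) (max (b * cb3 - a * c2) (-(b * c4))) := by
  fin_cases i <;>
    simp only [JAgents, Matrix.mulVec, dotProduct, Fin.sum_univ_three, Matrix.of_apply,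
      Matrix.cons_val', Matrix.cons_val_fin_one, Matrix.cons_val_zero, Matrix.cons_val_one,
      Matrix.cons_val, Fin.zero_eta, Fin.mk_one, Fin.reduceFinMk, Fin.isValue]
  · refine le_max_of_le_left ?_
    linarith [hαlb (x 0), mul_le_mul_of_nonneg_left (hρ1ub (x 2 - x 0)) (add_nonneg ha hb)]
  · refine le_max_of_le_right (le_max_of_le_left ?_)
    linarith [mul_le_mul_of_nonneg_left (hρ2lb (x 0 - x 1)) ha,
      mul_le_mul_of_nonneg_left (hρ3ub (x 2 - x 1)) hb]
  · refine le_max_of_le_right (le_max_of_le_right ?_)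
    linarith [mul_le_mul_of_nonneg_left (hρ4lb (x 1 - x 2)) hb]

end Agents

theorem max_abs_fin_three_eq_norm (x : Fin 3 → ℝ) : max |x 0| (max |x 1| |x 2|) = ‖x‖ := by
  refine le_antisymm
    (max_le (norm_le_pi_norm x 0) (max_le (norm_le_pi_norm x 1) (norm_le_pi_norm x 2)))
    ((pi_norm_le_iff_of_nonneg (by positivity)).2 fun i => ?_)
  fin_cases i <;> simp

theorem multiagent_example_general
    (α ρ1 ρ2 ρ3 ρ4 α' ρ1' ρ2' ρ3' ρ4' : ℝ → ℝ)
    -- continuous differentiability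
    (hα : ∀ s, HasDerivAt α (α' s) s)
    (hρ1 : ∀ s, HasDerivAt ρ1 (ρ1' s) s)
    (hρ2 : ∀ s, HasDerivAt ρ2 (ρ2' s) s)
    (hρ3 : ∀ s, HasDerivAt ρ3 (ρ3' s) s)
    (hρ4 : ∀ s, HasDerivAt ρ4 (ρ4' s) s)
    -- strict monotonicity and zeros at the origin
    (hα0 : α 0 = 0)
    (hρ1m : StrictMono ρ1) (hρ10 : ρ1 0 = 0)
    (hρ2m : StrictMono ρ2) (hρ20 : ρ2 0 = 0)
    (hρ3m : StrictMono ρ3) (hρ30 : ρ3 0 = 0)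
    (hρ4m : StrictMono ρ4) (hρ40 : ρ4 0 = 0)
    -- slope bounds
    (c0 cb1 c2 cb3 c4 : ℝ)
    (hc0 : 0 < c0) (hc4 : 0 < c4)
    (hαlb : ∀ s, c0 ≤ α' s)
    (hρ1ub : ∀ s, ρ1' s ≤ cb1)
    (hρ2lb : ∀ s, c2 ≤ ρ2' s)
    (hρ3ub : ∀ s, ρ3' s ≤ cb3)
    (hρ4lb : ∀ s, c4 ≤ ρ4' s)
    -- choice of `ε₁, ε₂`
    (ε1 ε2 : ℝ) (hε1 : 0 < ε1) (hε2 : 0 < ε2)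
    (hchoice1 : (ε1 + ε2) * cb1 < c0) (hchoice2 : ε2 * cb3 < ε1 * c2)
    -- the weight vector and the contraction rate
    (w : Fin 3 → ℝ) (hwdef : w = ![1, 1 + ε1, 1 + ε1 + ε2])
    (c : ℝ)
    (hcdef : c = max ((ε1 + ε2) * cb1 - c0) (max (ε2 * cb3 - ε1 * c2) (-(ε2 * c4)))) :
    c < 0 ∧
    (∀ x : Fin 3 → ℝ, ∀ i, (JAgents α' ρ1' ρ2' ρ3' ρ4' x).mulVec w i ≤ c) ∧
    IsGAS (fAgents α ρ1 ρ2 ρ3 ρ4) Set.univ 0 ∧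
    IsGlobalLyapunov (fAgents α ρ1 ρ2 ρ3 ρ4) Set.univ 0
      (fun x => max |x 0| (max |x 1| |x 2|)) := by
  subst hwdef
  set W := 1 + ε1 + ε2
  have hW : 0 < W := by positivity
  have hw_ge : ∀ i, 1 ≤ ![1, 1 + ε1, W] i := by intro i; fin_cases i <;> dsimp <;> linarith
  have hw_le : ∀ i, ![1, 1 + ε1, W] i ≤ W := by intro i; fin_cases i <;> dsimp <;> linarith
  have hk0 : (ε1 + ε2) * cb1 - c0 ≤ c := hcdef ▸ le_max_left _ _
  have hk1 : ε2 * cb3 - ε1 * c2 ≤ c := hcdef ▸ (le_max_left _ _).trans (le_max_right _ _)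
  have hk2 : -(ε2 * c4) ≤ c := hcdef ▸ (le_max_right _ _).trans (le_max_right _ _)
  have hc : c < 0 := hcdef ▸ max_lt (by linarith) (max_lt (by linarith) (by nlinarith))
  have hcW : ∀ {u}, u ≤ W → c ≤ c / W * u := fun hu => by
    rw [div_mul_eq_mul_div, le_div_iff₀ hW]
    nlinarith
  have hinward := inwardOnBoxes_fAgents hα hα0 hρ1 hρ10 hρ1m.monotone hρ2 hρ20 hρ2m.monotone hρ3
    hρ30 hρ3m.monotone hρ4 hρ40 hρ4m.monotone hαlb hρ1ub hρ2lb hρ3ub hρ4lb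
  have hinw : InwardOnBoxes (fAgents α ρ1 ρ2 ρ3 ρ4) ![1, 1 + ε1, W] (c / W) :=
    hinward ε1 ε2 (c / W) hε1.le hε2.le (by linarith [hcW (u := 1) (by linarith)])
      (hk1.trans (hcW (by linarith))) (hk2.trans (hcW le_rfl))
  have hin1 : InwardOnBoxes (fAgents α ρ1 ρ2 ρ3 ρ4) 1 0 := by
    convert hinward 0 0 0 le_rfl le_rfl (by linarith) (by simp) (by simp) using 1
    ext i
    fin_cases i <;> simp
  have hgas : IsGAS (fAgents α ρ1 ρ2 ρ3 ρ4) Set.univ 0 :=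
    isGAS_of_norm_le_mul_exp hW (div_neg_of_neg_of_pos hc hW) fun x hx t ht =>
      norm_le_mul_exp_of_inwardOnBoxes hw_ge hw_le hinw hx.2 ht
  refine ⟨hc, fun x i => hcdef ▸ JAgents_mulVec_le hαlb hρ1ub hρ2lb hρ3ub hρ4lb hε1.le hε2.le x i,
    hgas, ?_⟩
  rw [funext max_abs_fin_three_eq_norm]
  refine isGlobalLyapunov_norm (fun x hx s hs t _ hst => ?_) hgas.2
  simpa using norm_div_le_mul_exp_of_inwardOnBoxes (v := 1) (fun _ => one_pos) hin1 hx.2 hs hst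

/-- Example (multiagent system): with suitable slopes and `ε₁, ε₂`, the
weighted row sums of the Jacobian are uniformly negative, the origin is
globally asymptotically stable, and `max{|x₁|,|x₂|,|x₃|}` is a global
Lyapunov function. -/
theorem multiagent_example
    (α ρ1 ρ2 ρ3 ρ4 α' ρ1' ρ2' ρ3' ρ4' : ℝ → ℝ)
    -- continuous differentiability
    (hα : ∀ s, HasDerivAt α (α' s) s) (hαc : Continuous α')
    (hρ1 : ∀ s, HasDerivAt ρ1 (ρ1' s) s) (hρ1c : Continuous ρ1')
    (hρ2 : ∀ s, HasDerivAt ρ2 (ρ2' s) s) (hρ2c : Continuous ρ2')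
    (hρ3 : ∀ s, HasDerivAt ρ3 (ρ3' s) s) (hρ3c : Continuous ρ3')
    (hρ4 : ∀ s, HasDerivAt ρ4 (ρ4' s) s) (hρ4c : Continuous ρ4')
    -- strict monotonicity and zeros at the origin
    (hαm : StrictMono α) (hα0 : α 0 = 0)
    (hρ1m : StrictMono ρ1) (hρ10 : ρ1 0 = 0)
    (hρ2m : StrictMono ρ2) (hρ20 : ρ2 0 = 0)
    (hρ3m : StrictMono ρ3) (hρ30 : ρ3 0 = 0)
    (hρ4m : StrictMono ρ4) (hρ40 : ρ4 0 = 0)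
    -- slope bounds
    (c0 cb1 c2 cb3 c4 : ℝ)
    (hc0 : 0 < c0) (hcb1 : 0 < cb1) (hc2 : 0 < c2) (hcb3 : 0 < cb3) (hc4 : 0 < c4)
    (hαlb : ∀ s, c0 ≤ α' s)
    (hρ1ub : ∀ s, ρ1' s ≤ cb1)
    (hρ2lb : ∀ s, c2 ≤ ρ2' s)
    (hρ3ub : ∀ s, ρ3' s ≤ cb3)
    (hρ4lb : ∀ s, c4 ≤ ρ4' s)
    -- choice of `ε₁, ε₂`
    (ε1 ε2 : ℝ) (hε1 : 0 < ε1) (hε2 : 0 < ε2)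
    (hchoice1 : (ε1 + ε2) * cb1 < c0) (hchoice2 : ε2 * cb3 < ε1 * c2)
    -- the weight vector and the contraction rate
    (w : Fin 3 → ℝ) (hwdef : w = ![1, 1 + ε1, 1 + ε1 + ε2])
    (c : ℝ)
    (hcdef : c = max ((ε1 + ε2) * cb1 - c0) (max (ε2 * cb3 - ε1 * c2) (-(ε2 * c4)))) :
    c < 0 ∧
    (∀ x : Fin 3 → ℝ, ∀ i, (JAgents α' ρ1' ρ2' ρ3' ρ4' x).mulVec w i ≤ c) ∧
    IsGAS (fAgents α ρ1 ρ2 ρ3 ρ4) Set.univ 0 ∧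
    IsGlobalLyapunov (fAgents α ρ1 ρ2 ρ3 ρ4) Set.univ 0
      (fun x => max |x 0| (max |x 1| |x 2|)) :=
  multiagent_example_general α ρ1 ρ2 ρ3 ρ4 α' ρ1' ρ2' ρ3' ρ4' hα hρ1 hρ2 hρ3 hρ4 hα0 hρ1m hρ10 hρ2m
    hρ20 hρ3m hρ30 hρ4m hρ40 c0 cb1 c2 cb3 c4 hc0 hc4 hαlb hρ1ub hρ2lb hρ3ub hρ4lb ε1 ε2 hε1 hε2
    hchoice1 hchoice2 w hwdef c hcdef

end
end
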